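/- Set T := Kθ̄⊗θ + θK⊗θ̄ ∈ 𝒩⊗𝒩. Then T² = −2·(ρ⊗ρ), T³ = 0, ℳ = 1⊗1 + T + (1/2)T², ℳ is invertible with ℳ⁻¹ = 1⊗1 − T + (1/2)T², and for every natural number p one has ℳ^p = 1⊗1 + p·T + (p²/2)·T² = 1⊗1 + p·T − p²·(ρ⊗ρ). -/

import Mathlib

noncomputable section

open TensorProduct

/-- The quadratic form `q(x₀,x₁,x₂) = x₀²` on `ℝ³`. -/
def Nform : QuadraticForm ℝ (Fin 3 → ℝ) :=
  QuadraticMap.weightedSumSquares ℝ (fun i : Fin 3 => if i = 0 then (1 : ℝ) else 0)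

/-- The algebra `𝒩 = ℤ/2 ⋉ Λ*ℝ²`, realized as the Clifford algebra of `Nform`. -/
abbrev NA := CliffordAlgebra Nform

/-- The generator `K`. -/
def K : NA := CliffordAlgebra.ι Nform (Pi.single 0 1)

/-- The generator `θ`. -/
def θ : NA := CliffordAlgebra.ι Nform (Pi.single 1 1)

/-- The generator `θ̄`. -/
def θb : NA := CliffordAlgebra.ι Nform (Pi.single 2 1)

/-- `ρ := θ̄θ`. -/
def ρ : NA := θb * θ

/-- `T := Kθ̄⊗θ + θK⊗θ̄`. -/
def T : NA ⊗[ℝ] NA := (K * θb) ⊗ₜ[ℝ] θ + (θ * K) ⊗ₜ[ℝ] θb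

/-- The monodromy element `ℳ = 1⊗1 + Kθ̄⊗θ + θK⊗θ̄ − ρ⊗ρ`. -/
def Mono : NA ⊗[ℝ] NA := 1 + (K * θb) ⊗ₜ[ℝ] θ + (θ * K) ⊗ₜ[ℝ] θb - ρ ⊗ₜ[ℝ] ρ

/- When `N * N * N = 0`, `truncExp N a` is `exp (a • N)`, so the exponential law `truncExp_add`
survives the truncation. As `T * T * T = 0` and `ℳ = truncExp T 1`, this gives
`ℳ⁻¹ = truncExp T (-1)` and `ℳ ^ p = truncExp T p`. -/

section TruncExp

variable {R A : Type*} [Field R] [Ring A] [Algebra R A] {N : A}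

def truncExp (N : A) (a : R) : A := 1 + a • N + (a ^ 2 / 2) • (N * N)

theorem truncExp_zero : truncExp N (0 : R) = 1 := by
  simp [truncExp]

variable [CharZero R]

theorem truncExp_add (hN : N * N * N = 0) (a b : R) :
    truncExp N (a + b) = truncExp N a * truncExp N b := by
  have hN' : N * (N * N) = 0 := by rw [← mul_assoc, hN]
  have hN4 : N * N * (N * N) = 0 := by rw [← mul_assoc, hN, zero_mul]
  simp only [truncExp, add_mul, mul_add, one_mul, mul_one, smul_mul_assoc, mul_smul_comm,
    hN, hN', hN4, smul_zero, add_zero]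
  module

theorem truncExp_mul_truncExp_neg (hN : N * N * N = 0) (a : R) :
    truncExp N a * truncExp N (-a) = 1 := by
  rw [← truncExp_add hN, add_neg_cancel, truncExp_zero]

theorem truncExp_neg_mul_truncExp (hN : N * N * N = 0) (a : R) :
    truncExp N (-a) * truncExp N a = 1 := by
  rw [← truncExp_add hN, neg_add_cancel, truncExp_zero]

theorem truncExp_pow (hN : N * N * N = 0) (a : R) (n : ℕ) :
    truncExp N a ^ n = truncExp N (n * a) := by
  induction n with
  | zero => simp [truncExp_zero]
  | succ n ih => rw [pow_succ, ih, ← truncExp_add hN, Nat.cast_succ, add_one_mul]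

end TruncExp

theorem Nform_apply (v : Fin 3 → ℝ) : Nform v = v 0 * v 0 := by
  simp [Nform, QuadraticMap.weightedSumSquares_apply]

theorem Nform_isOrtho_single {i j : Fin 3} (h : i ≠ 0 ∨ j ≠ 0) :
    Nform.IsOrtho (Pi.single i 1) (Pi.single j 1) := by
  rw [QuadraticMap.isOrtho_def, Nform_apply, Nform_apply, Nform_apply, Pi.add_apply]
  rcases h with h | h <;> simp [Pi.single_eq_of_ne (Ne.symm h)]

theorem K_mul_K : K * K = 1 := by
  rw [K, CliffordAlgebra.ι_sq_scalar, Nform_apply]; simp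

theorem θ_mul_θ : θ * θ = 0 := by
  rw [θ, CliffordAlgebra.ι_sq_scalar, Nform_apply]; simp

theorem θb_mul_θb : θb * θb = 0 := by
  rw [θb, CliffordAlgebra.ι_sq_scalar, Nform_apply]; simp

theorem θ_mul_K : θ * K = -(K * θ) :=
  CliffordAlgebra.ι_mul_ι_comm_of_isOrtho (Nform_isOrtho_single (Or.inl one_ne_zero))

theorem θb_mul_K : θb * K = -(K * θb) :=
  CliffordAlgebra.ι_mul_ι_comm_of_isOrtho (Nform_isOrtho_single (Or.inl (by decide)))

theorem θ_mul_θb : θ * θb = -ρ :=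
  CliffordAlgebra.ι_mul_ι_comm_of_isOrtho (Nform_isOrtho_single (Or.inl one_ne_zero))

theorem ρ_mul_K : ρ * K = K * ρ := by
  rw [ρ, mul_assoc, θ_mul_K, mul_neg, ← mul_assoc, θb_mul_K, neg_mul, neg_neg, mul_assoc]

theorem θ_mul_ρ : θ * ρ = 0 := by
  rw [ρ, ← mul_assoc, θ_mul_θb, ρ, neg_mul, mul_assoc, θ_mul_θ, mul_zero, neg_zero]

theorem θb_mul_ρ : θb * ρ = 0 := by
  rw [ρ, ← mul_assoc, θb_mul_θb, zero_mul]

theorem Kθb_mul_θK : K * θb * (θ * K) = ρ := by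
  rw [← mul_assoc, mul_assoc K, ← ρ, mul_assoc, ρ_mul_K, ← mul_assoc, K_mul_K, one_mul]

theorem θK_mul_Kθb : θ * K * (K * θb) = -ρ := by
  rw [← mul_assoc, mul_assoc θ, K_mul_K, mul_one, θ_mul_θb]

theorem T_mul_T : T * T = (-2 : ℝ) • (ρ ⊗ₜ[ℝ] ρ) := by
  simp only [T, add_mul, mul_add, Algebra.TensorProduct.tmul_mul_tmul, Kθb_mul_θK, θK_mul_Kθb,
    θ_mul_θ, θb_mul_θb, θ_mul_θb, ← ρ.eq_1, tmul_zero, zero_add, add_zero, neg_tmul, tmul_neg]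
  module

theorem T_mul_ρ_tmul_ρ : T * (ρ ⊗ₜ[ℝ] ρ) = 0 := by
  simp only [T, add_mul, Algebra.TensorProduct.tmul_mul_tmul, θ_mul_ρ, θb_mul_ρ, tmul_zero,
    add_zero]

theorem T_mul_T_mul_T : T * T * T = 0 := by
  rw [mul_assoc, T_mul_T, mul_smul_comm, T_mul_ρ_tmul_ρ, smul_zero]

theorem Mono_eq : Mono = 1 + T + (1 / 2 : ℝ) • (T * T) := by
  rw [T_mul_T, smul_smul, Mono, T]
  module

theorem Mono_eq_truncExp : Mono = truncExp T (1 : ℝ) := by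
  rw [Mono_eq, truncExp, one_smul, one_pow]

/-- `T² = −2·(ρ⊗ρ)`, `T³ = 0`, `ℳ = 1⊗1 + T + (1/2)T²`, `ℳ` is invertible
with `ℳ⁻¹ = 1⊗1 − T + (1/2)T²`, and for every natural `p`,
`ℳ^p = 1⊗1 + p·T + (p²/2)·T² = 1⊗1 + p·T − p²·(ρ⊗ρ)`. -/
theorem stmt8 :
    T * T = (-2 : ℝ) • (ρ ⊗ₜ[ℝ] ρ) ∧
    T * T * T = 0 ∧
    Mono = 1 + T + (1 / 2 : ℝ) • (T * T) ∧
    Mono * (1 - T + (1 / 2 : ℝ) • (T * T)) = 1 ∧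
    (1 - T + (1 / 2 : ℝ) • (T * T)) * Mono = 1 ∧
    (∀ p : ℕ,
      Mono ^ p = 1 + (p : ℝ) • T + ((p : ℝ) ^ 2 / 2) • (T * T) ∧
      Mono ^ p = 1 + (p : ℝ) • T - ((p : ℝ) ^ 2) • (ρ ⊗ₜ[ℝ] ρ)) := by
  have hinv : 1 - T + (1 / 2 : ℝ) • (T * T) = truncExp T (-1 : ℝ) := by
    rw [truncExp, neg_one_smul, neg_one_sq, ← sub_eq_add_neg]
  have hpow (p : ℕ) : Mono ^ p = 1 + (p : ℝ) • T + ((p : ℝ) ^ 2 / 2) • (T * T) := by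
    rw [Mono_eq_truncExp, truncExp_pow T_mul_T_mul_T, mul_one, truncExp]
  refine ⟨T_mul_T, T_mul_T_mul_T, Mono_eq, ?_, ?_, fun p => ⟨hpow p, ?_⟩⟩
  · rw [Mono_eq_truncExp, hinv, truncExp_mul_truncExp_neg T_mul_T_mul_T]
  · rw [Mono_eq_truncExp, hinv, truncExp_neg_mul_truncExp T_mul_T_mul_T]
  · rw [hpow, T_mul_T, smul_smul]
    module
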